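/- With r defined by r(1) = 2 and r(d) = 1 + min_{λ ⊢ d, |λ| ≥ 2} ∑_{j=1}^{d-1} m_j(λ)·r(j) for d > 1, one has r(d) = 2d + 1 for all d > 1. -/

import Mathlib

/-- `partitionSum r P` is `r(λ) = ∑_{j=1}^{d-1} m_j(λ) · r(j)` for a partition `P` of `d`. -/
def partitionSum (r : ℕ → ℕ) {d : ℕ} (P : Nat.Partition d) : ℕ :=
  ∑ j ∈ Finset.Icc 1 (d - 1), P.parts.count j * r j

/-!
Splitting `d` into `d` ones costs `d · r(1) = 2d`, and by induction every part `j < d` costs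
`r(j) ≥ 2j`, so no partition with at least two parts does better: the minimum is `2d`.
-/

namespace Nat.Partition

lemma lt_of_mem_parts_of_two_le_card {n m : ℕ} {p : Partition n} (hp : 2 ≤ p.parts.card)
    (hm : m ∈ p.parts) : m < n := by
  obtain ⟨t, ht⟩ := Multiset.exists_cons_of_mem hm
  have hsum : m + t.sum = n := by rw [← p.parts_sum, ht, Multiset.sum_cons]
  obtain ⟨b, hb⟩ : ∃ b, b ∈ t :=
    Multiset.card_pos_iff_exists_mem.mp (by rw [ht, Multiset.card_cons] at hp; omega)
  have hb_pos : 0 < b := p.parts_pos (by rw [ht]; exact Multiset.mem_cons_of_mem hb)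
  have := Multiset.le_sum_of_mem hb
  omega

def ones (n : ℕ) : Partition n where
  parts := Multiset.replicate n 1
  parts_pos hi := by rw [Multiset.eq_of_mem_replicate hi]; exact one_pos
  parts_sum := by simp

@[simp]
lemma card_ones_parts (n : ℕ) : (ones n).parts.card = n :=
  Multiset.card_replicate n 1

lemma sum_map_ones_parts (r : ℕ → ℕ) (n : ℕ) : ((ones n).parts.map r).sum = n * r 1 := by
  simp [ones]

lemma mul_le_sum_map_parts {n c : ℕ} {r : ℕ → ℕ} (p : Partition n)
    (h : ∀ j ∈ p.parts, c * j ≤ r j) : c * n ≤ (p.parts.map r).sum :=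
  calc c * n = (p.parts.map (c * ·)).sum := by rw [Multiset.sum_map_mul_left, Multiset.map_id',
        p.parts_sum]
    _ ≤ (p.parts.map r).sum := Multiset.sum_map_le_sum_map _ _ h

end Nat.Partition

lemma partitionSum_eq_sum_map (r : ℕ → ℕ) {d : ℕ} (P : Nat.Partition d)
    (hP : ∀ j ∈ P.parts, j < d) : partitionSum r P = (P.parts.map r).sum := by
  rw [partitionSum, Finset.sum_multiset_map_count]
  refine (Finset.sum_subset (fun j hj => ?_) (fun j _ hj => ?_)).symm
  · rw [Multiset.mem_toFinset] at hj
    have := P.parts_pos hj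
    have := hP j hj
    rw [Finset.mem_Icc]
    omega
  · rw [Multiset.mem_toFinset] at hj
    simp [Multiset.count_eq_zero_of_notMem hj]

lemma isLeast_partitionSum (r : ℕ → ℕ) (h1 : r 1 = 2) {d : ℕ} (hd : 1 < d)
    (hlt : ∀ j, 1 < j → j < d → 2 * j ≤ r j) :
    IsLeast {s | ∃ P : Nat.Partition d, 2 ≤ P.parts.card ∧ s = partitionSum r P} (2 * d) := by
  have hparts {P : Nat.Partition d} (hP : 2 ≤ P.parts.card) :
      partitionSum r P = (P.parts.map r).sum :=
    partitionSum_eq_sum_map r P fun _ => P.lt_of_mem_parts_of_two_le_card hP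
  have hones : 2 ≤ (Nat.Partition.ones d).parts.card := by rwa [Nat.Partition.card_ones_parts]
  refine ⟨⟨Nat.Partition.ones d, hones, ?_⟩, ?_⟩
  · rw [hparts hones, Nat.Partition.sum_map_ones_parts, h1, mul_comm]
  · rintro s ⟨P, hP, rfl⟩
    rw [hparts hP]
    refine P.mul_le_sum_map_parts fun j hj => ?_
    rcases Nat.lt_or_eq_of_le (P.parts_pos hj) with hj1 | rfl
    · exact hlt j hj1 (P.lt_of_mem_parts_of_two_le_card hP hj)
    · rw [h1]

theorem stmt_6 (r : ℕ → ℕ) (h1 : r 1 = 2)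
    (hrec : ∀ d, 1 < d →
      r d = 1 + sInf {s | ∃ P : Nat.Partition d, 2 ≤ P.parts.card ∧ s = partitionSum r P})
    (d : ℕ) (hd : 1 < d) :
    r d = 2 * d + 1 := by
  induction d using Nat.strong_induction_on with
  | _ d ih =>
    have hlt (j : ℕ) (hj1 : 1 < j) (hjd : j < d) : 2 * j ≤ r j := by
      rw [ih j hjd hj1]
      omega
    rw [hrec d hd, (isLeast_partitionSum r h1 hd hlt).csInf_eq, add_comm]
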